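/- arXiv:1902.11016 — 12 statements merged into one kernel-verified Lean document; each statement's English description precedes it below -/
import Mathlib

section
/- Let K/F be a finite field extension, c ∈ K^×, and σ a nontrivial F-automorphism of K. The algebra D(K,σ,c) = K ⊕ K with multiplication (u,v)(x,y) = (ux + c·σ(vy), uy + vx) is a division algebra over F if and only if c ≠ r²·s·σ(s)⁻¹·t⁻¹·σ(t)⁻¹ for all r,s,t ∈ K^×. -/
/-- The Dickson doubling multiplication on `B ⊕ B`. -/
def dicksonMul {B : Type*} [Ring B] (σ : B → B) (c : B) (p q : B × B) : B × B :=
  (p.1 * q.1 + c * σ (p.2 * q.2), p.1 * q.2 + p.2 * q.1)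

theorem stmt0 (F K : Type*) [Field F] [Field K] [Algebra F K] [FiniteDimensional F K]
    (σ : K ≃ₐ[F] K) (hσ : σ ≠ AlgEquiv.refl) (c : K) (hc : c ≠ 0) :
    (∀ p q : K × K, dicksonMul σ c p q = 0 → p = 0 ∨ q = 0) ↔
      ∀ r s t : K, r ≠ 0 → s ≠ 0 → t ≠ 0 →
        c ≠ r ^ 2 * s * (σ s)⁻¹ * t⁻¹ * (σ t)⁻¹ := by
  have hσ0 : ∀ a : K, σ a = 0 → a = 0 := by
    intro a ha
    have := σ.injective (ha.trans (map_zero σ).symm)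
    simpa using this
  constructor
  · intro h r s t hr hs ht hceq
    have hσs : σ s ≠ 0 := fun h0 => hs (hσ0 s h0)
    have hσt : σ t ≠ 0 := fun h0 => ht (hσ0 t h0)
    have := h (r, t) (-(r * s) / t, s) ?_
    · rcases this with h1 | h1
      · exact hr (congrArg Prod.fst h1)
      · exact hs (congrArg Prod.snd h1)
    · unfold dicksonMul
      rw [Prod.ext_iff]
      simp only [Prod.fst_zero, Prod.snd_zero, map_mul]
      constructor
      · rw [hceq]
        field_simp
        ring
      · field_simp
        ring
  · intro h p q hpq
    by_contra hcon
    push_neg at hcon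
    obtain ⟨hp, hq⟩ := hcon
    unfold dicksonMul at hpq
    rw [Prod.ext_iff] at hpq
    obtain ⟨e1, e2⟩ := hpq
    simp only [Prod.fst_zero, Prod.snd_zero] at e1 e2
    set u := p.1 with hu'
    set v := p.2 with hv'
    set x := q.1 with hx'
    set y := q.2 with hy'
    have hy : y ≠ 0 := by
      intro h0
      rw [h0] at e1 e2
      simp only [mul_zero, map_zero, add_zero, zero_add] at e1 e2
      have hx0 : x ≠ 0 := by
        intro hx0
        apply hq
        rw [Prod.ext_iff]
        exact ⟨hx0, h0⟩
      have hv0 : v = 0 := by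
        rcases mul_eq_zero.mp e2 with h | h
        · exact h
        · exact absurd h hx0
      have hu0 : u = 0 := by
        rcases mul_eq_zero.mp e1 with h | h
        · exact h
        · exact absurd h hx0
      exact hp (Prod.ext_iff.mpr ⟨hu0, hv0⟩)
    have hv : v ≠ 0 := by
      intro h0
      have hu0 : u ≠ 0 := fun huu => hp (Prod.ext_iff.mpr ⟨huu, h0⟩)
      rw [h0, zero_mul, add_zero] at e2
      rcases mul_eq_zero.mp e2 with h' | h'
      · exact hu0 h'
      · exact hy h'
    have hu : u ≠ 0 := by
      intro h0
      rw [h0, zero_mul, zero_add] at e1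
      rcases mul_eq_zero.mp e1 with h' | h'
      · exact hc h'
      · exact hv (mul_eq_zero.mp (hσ0 _ h') |>.elim id (fun hh => absurd hh hy))
    have hσv : σ v ≠ 0 := fun h0 => hv (hσ0 v h0)
    have hσy : σ y ≠ 0 := fun h0 => hy (hσ0 y h0)
    apply h u y v hu hy hv
    -- from e2 : u*y + v*x = 0, so v*x = -(u*y)
    have hvx : v * x = -(u * y) := by linear_combination e2
    -- multiply e1 by v : u*(v*x) + c*v*σ(v*y) = 0
    have e1v : u * (v * x) + c * v * σ (v * y) = 0 := by linear_combination v * e1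
    rw [hvx, map_mul] at e1v
    field_simp
    linear_combination e1v
end

section
/- Let K/F be a finite field extension, c ∈ K^×, σ ∈ Aut_F(K) nontrivial. If the field norm N_{K/F}(c) is not equal to N_{K/F}(a²) = N_{K/F}(a)² for any a ∈ K^×, then D(K,σ,c) is a division algebra over F. -/
theorem stmt1 (F K : Type*) [Field F] [Field K] [Algebra F K] [FiniteDimensional F K]
    (σ : K ≃ₐ[F] K) (hσ : σ ≠ AlgEquiv.refl) (c : K) (hc : c ≠ 0)
    (hnorm : ∀ a : K, a ≠ 0 → Algebra.norm F c ≠ Algebra.norm F (a ^ 2)) :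
    ∀ p q : K × K, dicksonMul σ c p q = 0 → p = 0 ∨ q = 0 := by
  intro p q h
  by_contra hpq
  push_neg at hpq
  obtain ⟨hp, hq⟩ := hpq
  have h1 : p.1 * q.1 + c * σ (p.2 * q.2) = 0 := congrArg Prod.fst h
  have h2 : p.1 * q.2 + p.2 * q.1 = 0 := congrArg Prod.snd h
  have hzero : ∀ r : K × K, r.1 = 0 → r.2 = 0 → r = 0 := by
    intro r hr1 hr2
    have : r = (r.1, r.2) := rfl
    rw [this, hr1, hr2]; rfl
  by_cases hp2 : p.2 = 0
  · have hp1 : p.1 ≠ 0 := fun h0 => hp (hzero p h0 hp2)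
    rw [hp2] at h1 h2
    simp only [zero_mul, mul_zero, map_zero, add_zero, zero_add] at h1 h2
    rcases mul_eq_zero.mp h1 with h' | h'
    · exact hp1 h'
    rcases mul_eq_zero.mp h2 with h'' | h''
    · exact hp1 h''
    exact hq (hzero q h' h'')
  by_cases hq2 : q.2 = 0
  · rw [hq2] at h1 h2
    simp only [mul_zero, map_zero, add_zero, zero_add] at h1 h2
    rcases mul_eq_zero.mp h2 with h' | h'
    · exact hp2 h'
    exact hq (hzero q h' hq2)
  -- main case: p.2 ≠ 0, q.2 ≠ 0
  have hσne : σ (p.2 * q.2) ≠ 0 := by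
    intro h0
    exact mul_ne_zero hp2 hq2 (by simpa using congrArg σ.symm h0)
  have key : c * (σ (p.2 * q.2) * p.2) = p.1 ^ 2 * q.2 := by
    linear_combination p.2 * h1 - p.1 * h2
  have hp1 : p.1 ≠ 0 := by
    intro h0
    rw [h0] at key
    have : c * (σ (p.2 * q.2) * p.2) = 0 := by rw [key]; ring
    rcases mul_eq_zero.mp this with h' | h'
    · exact hc h'
    · rcases mul_eq_zero.mp h' with h'' | h''
      · exact hσne h''
      · exact hp2 h''
  have hnk := congrArg (Algebra.norm F) key
  simp only [map_mul, map_pow, Algebra.norm_eq_of_algEquiv] at hnk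
  have hNp2 : Algebra.norm F p.2 ≠ 0 := (Algebra.norm_ne_zero_iff).mpr hp2
  have hNq2 : Algebra.norm F q.2 ≠ 0 := (Algebra.norm_ne_zero_iff).mpr hq2
  apply hnorm (p.1 / p.2) (div_ne_zero hp1 hp2)
  have aux : Algebra.norm F ((p.1 / p.2) ^ 2) * Algebra.norm F p.2 ^ 2
      = Algebra.norm F p.1 ^ 2 := by
    rw [← map_pow, ← map_mul, ← map_pow]
    congr 1
    field_simp
  have h3 : Algebra.norm F c * Algebra.norm F p.2 ^ 2 = Algebra.norm F p.1 ^ 2 := by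
    apply mul_right_cancel₀ hNq2
    linear_combination hnk
  apply mul_right_cancel₀ (pow_ne_zero 2 hNp2)
  rw [aux]
  exact h3
end

section
/- Let K/F be a finite field extension, σ ∈ Aut_F(K) nontrivial. If c is a square in K, then D(K,σ,c) is not a division algebra. -/
theorem stmt2 (F K : Type*) [Field F] [Field K] [Algebra F K] [FiniteDimensional F K]
    (σ : K ≃ₐ[F] K) (hσ : σ ≠ AlgEquiv.refl) (c : K) (hc : c ≠ 0)
    (hsq : ∃ r : K, c = r ^ 2) :
    ¬ (∀ p q : K × K, dicksonMul σ c p q = 0 → p = 0 ∨ q = 0) := by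
  obtain ⟨r, hr⟩ := hsq
  intro h
  have := h (r, 1) (-r, 1) (by
    simp [dicksonMul, hr]
    ring)
  rcases this with h1 | h1 <;>
    simpa using congrArg Prod.snd h1
end

section
/- Let K/F be a finite field extension of odd characteristic finite fields (F = F_{p^s}, K = F_{p^r}, p odd) and σ ∈ Aut_F(K) nontrivial. Then D(K,σ,c) is a division algebra if and only if c is not a square in K. -/
/-!
If `c = r ^ 2` then `(r, 1) (r, -1) = 0`, so `D(K, σ, c)` has zero divisors. Conversely, from
`(u₁, u₂) (v₁, v₂) = 0` with `u₂, v₂ ≠ 0` one gets `c · (σ u₂ · u₂) · (σ v₂ · v₂) = (u₁ v₂) ^ 2`.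
Over a finite field every automorphism preserves the quadratic character, so `σ x · x` is a
square, and hence so is `c`.
-/

theorem quadraticChar_map_ringEquiv {K : Type*} [Field K] [Fintype K] [DecidableEq K]
    (σ : K ≃+* K) (x : K) : quadraticChar K (σ x) = quadraticChar K x := by
  have hsq : IsSquare (σ x) ↔ IsSquare x :=
    ⟨fun h => by simpa using h.map σ.symm, fun h => h.map σ⟩
  simp only [quadraticChar_apply, quadraticCharFun, map_eq_zero_iff σ σ.injective, hsq]

theorem isSquare_map_mul_self {K : Type*} [Field K] [Finite K] (σ : K ≃+* K) (x : K) :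
    IsSquare (σ x * x) := by
  classical
  have := Fintype.ofFinite K
  rcases eq_or_ne x 0 with rfl | hx
  · simp
  rw [← quadraticChar_one_iff_isSquare (by simpa using hx), map_mul,
    quadraticChar_map_ringEquiv, ← sq, quadraticChar_sq_one hx]

theorem dicksonMul_sq_conj_eq_zero {B : Type*} [CommRing B] (σ : B →+* B) (r : B) :
    dicksonMul σ (r ^ 2) (r, 1) (r, -1) = 0 := by
  simp only [dicksonMul, mul_neg, mul_one, map_neg, map_one, Prod.mk_eq_zero]
  constructor <;> ring

theorem eq_zero_or_eq_zero_of_dicksonMul_eq_zero {K : Type*} [Field K] (σ : K →+* K)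
    (hσ : ∀ x, IsSquare (σ x * x)) {c : K} (hc : ¬ IsSquare c) {u v : K × K}
    (h : dicksonMul σ c u v = 0) : u = 0 ∨ v = 0 := by
  obtain ⟨u₁, u₂⟩ := u
  obtain ⟨v₁, v₂⟩ := v
  simp only [dicksonMul, map_mul, Prod.mk_eq_zero] at h ⊢
  obtain ⟨e₁, e₂⟩ := h
  rcases eq_or_ne u₂ 0 with rfl | hu₂
  · simp only [map_zero, zero_mul, mul_zero, add_zero] at e₁ e₂
    rcases eq_or_ne u₁ 0 with rfl | hu₁
    · exact .inl ⟨rfl, rfl⟩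
    · exact .inr ⟨(mul_eq_zero.mp e₁).resolve_left hu₁, (mul_eq_zero.mp e₂).resolve_left hu₁⟩
  rcases eq_or_ne v₂ 0 with rfl | hv₂
  · simp only [map_zero, mul_zero, add_zero, zero_add] at e₁ e₂
    rcases eq_or_ne v₁ 0 with rfl | hv₁
    · exact .inr ⟨rfl, rfl⟩
    · exact .inl ⟨(mul_eq_zero.mp e₁).resolve_right hv₁, (mul_eq_zero.mp e₂).resolve_right hv₁⟩
  have key : c * ((σ u₂ * u₂) * (σ v₂ * v₂)) = (u₁ * v₂) ^ 2 := by
    linear_combination u₂ * v₂ * e₁ - u₁ * v₂ * e₂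
  have hne : (σ u₂ * u₂) * (σ v₂ * v₂) ≠ 0 := by simp [hu₂, hv₂]
  refine absurd ?_ hc
  rw [eq_div_of_mul_eq hne key]
  exact (IsSquare.sq _).div ((hσ u₂).mul (hσ v₂))

theorem stmt3_general
    (F K : Type*) [Field F] [Field K] [Finite K] [Algebra F K]
    (σ : K ≃ₐ[F] K) (c : K) :
    (∀ u v : K × K, dicksonMul σ c u v = 0 → u = 0 ∨ v = 0) ↔ ¬ ∃ r : K, c = r ^ 2 := by
  constructor
  · rintro h ⟨r, rfl⟩
    rcases h _ _ (dicksonMul_sq_conj_eq_zero (σ : K →+* K) r) with h | h <;>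
      simp [Prod.ext_iff] at h
  · exact fun hc _ _ => eq_zero_or_eq_zero_of_dicksonMul_eq_zero (σ : K →+* K)
      (isSquare_map_mul_self σ.toRingEquiv) (by rwa [isSquare_iff_exists_sq])

theorem stmt3 (p : ℕ) [Fact p.Prime] (hp : p ≠ 2)
    (F K : Type*) [Field F] [Field K] [Finite K] [Algebra F K] [CharP F p]
    (σ : K ≃ₐ[F] K) (hσ : σ ≠ AlgEquiv.refl) (c : K) (hc : c ≠ 0) :
    (∀ u v : K × K, dicksonMul σ c u v = 0 → u = 0 ∨ v = 0) ↔ ¬ ∃ r : K, c = r ^ 2 :=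
  stmt3_general F K σ c
end

section
/- For a finite field extension K/F with nontrivial σ ∈ Aut_F(K), the left and right nuclei of D(K,σ,c) both equal the fixed field Fix(σ) (embedded as Fix(σ) ⊕ 0), the middle nucleus equals K ⊕ 0, and the center equals Fix(σ) ⊕ 0. -/
/-- The associator of the Dickson algebra. -/
def dicksonAssoc {B : Type*} [Ring B] (σ : B → B) (c : B) (x y z : B × B) : B × B :=
  dicksonMul σ c (dicksonMul σ c x y) z - dicksonMul σ c x (dicksonMul σ c y z)

theorem stmt4 (F K : Type*) [Field F] [Field K] [Algebra F K] [FiniteDimensional F K]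
    (σ : K ≃ₐ[F] K) (hσ : σ ≠ AlgEquiv.refl) (c : K) (hc : c ≠ 0) :
    {x : K × K | ∀ y z : K × K, dicksonAssoc σ c x y z = 0}
        = {x : K × K | σ x.1 = x.1 ∧ x.2 = 0} ∧
    {y : K × K | ∀ x z : K × K, dicksonAssoc σ c x y z = 0}
        = {y : K × K | y.2 = 0} ∧
    {z : K × K | ∀ x y : K × K, dicksonAssoc σ c x y z = 0}
        = {z : K × K | σ z.1 = z.1 ∧ z.2 = 0} ∧
    {x : K × K | (∀ y z : K × K, dicksonAssoc σ c x y z = 0 ∧ dicksonAssoc σ c y x z = 0 ∧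
          dicksonAssoc σ c y z x = 0) ∧ ∀ y : K × K, dicksonMul σ c x y = dicksonMul σ c y x}
        = {x : K × K | σ x.1 = x.1 ∧ x.2 = 0} := by
  obtain ⟨t, ht⟩ : ∃ t : K, σ t ≠ t := by
    by_contra h; push_neg at h; exact hσ (AlgEquiv.ext h)
  have htt : t - σ t ≠ 0 := sub_ne_zero.mpr (Ne.symm ht)
  have key : ∀ a b u v p q : K, dicksonAssoc σ c (a, b) (u, v) (p, q) =
      (c * (σ (v * q) * (σ a - a) + σ (b * v) * (p - σ p)),
        c * σ v * (σ b * q - b * σ q)) := by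
    intro a b u v p q
    simp only [dicksonAssoc, dicksonMul, map_add, map_mul, Prod.mk_sub_mk, Prod.mk.injEq]
    constructor <;> ring
  have hb0 : ∀ b : K, σ b = 0 → b = 0 := by
    intro b hb
    have := σ.injective (hb.trans (map_zero σ).symm)
    simpa using this
  -- left nucleus
  have left : ∀ x : K × K, (∀ y z : K × K, dicksonAssoc σ c x y z = 0) ↔
      (σ x.1 = x.1 ∧ x.2 = 0) := by
    rintro ⟨a, b⟩
    constructor
    · intro h
      have h1 := h (1, 1) (1, 1)
      have h2 := h (1, 1) (t, 1)
      rw [key] at h1 h2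
      simp only [map_one, mul_one, one_mul, sub_self, mul_zero, add_zero, Prod.mk_eq_zero] at h1 h2
      obtain ⟨h1a, _⟩ := h1
      have ha : σ a = a := sub_eq_zero.mp (by
        rcases mul_eq_zero.mp h1a with h | h
        · exact absurd h hc
        · exact h)
      refine ⟨ha, ?_⟩
      obtain ⟨h2a, _⟩ := h2
      rw [ha, sub_self, zero_add, ← mul_assoc] at h2a
      rcases mul_eq_zero.mp h2a with h | h
      · rcases mul_eq_zero.mp h with h | h
        · exact absurd h hc
        · exact hb0 b h
      · exact absurd h htt
    · rintro ⟨ha, hb⟩ ⟨u, v⟩ ⟨p, q⟩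
      simp only at ha hb
      subst hb
      rw [key, ha]
      simp
  -- middle nucleus
  have middle : ∀ y : K × K, (∀ x z : K × K, dicksonAssoc σ c x y z = 0) ↔ y.2 = 0 := by
    rintro ⟨u, v⟩
    constructor
    · intro h
      have h1 := h (0, 1) (0, t)
      rw [key] at h1
      simp only [map_one, map_zero, one_mul, mul_zero, zero_mul, Prod.mk_eq_zero] at h1
      obtain ⟨_, h1b⟩ := h1
      show v = 0
      rcases mul_eq_zero.mp h1b with h | h
      · rcases mul_eq_zero.mp h with h | h
        · exact absurd h hc
        · exact hb0 v h
      · exact absurd (sub_eq_zero.mp h).symm ht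
    · intro hv
      simp only at hv
      subst hv
      rintro ⟨a, b⟩ ⟨p, q⟩
      rw [key]
      simp
  -- right nucleus
  have right : ∀ z : K × K, (∀ x y : K × K, dicksonAssoc σ c x y z = 0) ↔
      (σ z.1 = z.1 ∧ z.2 = 0) := by
    rintro ⟨p, q⟩
    constructor
    · intro h
      have h1 := h (1, 1) (1, 1)
      have h2 := h (t, 0) (1, 1)
      rw [key] at h1 h2
      simp only [map_one, map_zero, mul_one, one_mul, zero_mul, sub_self, mul_zero,
        add_zero, zero_add, Prod.mk_eq_zero] at h1 h2
      obtain ⟨h1a, _⟩ := h1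
      have hp : p - σ p = 0 := by
        rcases mul_eq_zero.mp h1a with h | h
        · exact absurd h hc
        · exact h
      obtain ⟨h2a, _⟩ := h2
      rw [← mul_assoc] at h2a
      have hq : q = 0 := by
        rcases mul_eq_zero.mp h2a with h | h
        · rcases mul_eq_zero.mp h with h | h
          · exact absurd h hc
          · exact hb0 q h
        · exact absurd (sub_eq_zero.mp h) ht
      exact ⟨(sub_eq_zero.mp hp).symm, hq⟩
    · rintro ⟨hp, hq⟩
      simp only at hp hq
      subst hq
      rintro ⟨a, b⟩ ⟨u, v⟩
      rw [key, hp]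
      simp
  refine ⟨Set.ext fun x => left x, Set.ext fun y => middle y, Set.ext fun z => right z,
    Set.ext fun x => ?_⟩
  simp only [Set.mem_setOf_eq]
  constructor
  · rintro ⟨h, _⟩
    exact (left x).mp fun y z => (h y z).1
  · rintro hx
    refine ⟨fun y z => ?_, fun y => ?_⟩
    · obtain ⟨ha, hb⟩ := hx
      obtain ⟨a, b⟩ := x
      simp only at ha hb
      subst hb
      obtain ⟨u, v⟩ := y
      obtain ⟨p, q⟩ := z
      refine ⟨(left (a, 0)).mpr ⟨ha, rfl⟩ _ _, ?_, ?_⟩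
      · rw [key]; simp
      · rw [key, ha]; simp
    · obtain ⟨a, b⟩ := x
      obtain ⟨u, v⟩ := y
      simp only [dicksonMul, Prod.mk.injEq]
      constructor <;> ring_nf
end

section
/- Let F have characteristic ≠ 2, K, L finite field extensions of F, σ ∈ Aut_F(K) and φ ∈ Aut_F(L) nontrivial, c ∈ K^×, d ∈ L^×. A map G : D(K,σ,c) → D(L,φ,d) is an F-algebra isomorphism if and only if G(x,y) = (τ(x), τ(y)b) for some F-isomorphism τ : K → L satisfying φ∘τ = τ∘σ and some b ∈ L^× with τ(c) = d·φ(b²). -/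
/-- `G` is an isomorphism of `F`-algebras `D(K,σ,c) → D(L,φ,d)`:
a bijective `F`-linear multiplicative map. -/
def IsDicksonIso (F : Type*) {K L : Type*} [Field F] [Field K] [Field L]
    [Algebra F K] [Algebra F L] (σ : K → K) (c : K) (φ : L → L) (d : L)
    (G : K × K → L × L) : Prop :=
  Function.Bijective G ∧ (∀ p q : K × K, G (p + q) = G p + G q) ∧
    (∀ (a : F) (p : K × K), G (a • p) = a • G p) ∧
    (∀ p q : K × K, G (dicksonMul σ c p q) = dicksonMul φ d (G p) (G q))

/-!
An isomorphism preserves the elements `A` with `(p A) q = p (A q)` for all `p, q`. In any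
Dickson algebra these include all `(x, 0)`, while in `D(L, φ, d)` with `φ ≠ id` and `d ≠ 0`
they all have second coordinate `0`. Hence `G` restricts to an `F`-algebra map `τ : K → L`, and
`G (x, y) = (τ x + τ y * s, τ y * b)` where `(s, b) = G (0, 1)`. Surjectivity of `G` forces
`b ≠ 0` and then `τ` surjective. Applying `G` to `(0, 1) (0, x) = (c σ x, 0)` gives
`2 s b = 0`, so `s = 0`, and `τ c * τ (σ x) = d * φ (b ^ 2) * φ (τ x)`: at `x = 1` this is
`τ c = d * φ (b ^ 2)`, and cancelling it gives `φ ∘ τ = τ ∘ σ`.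
-/

section MidNuclear

variable {B E : Type*} [FunLike E B B]

def IsDicksonMidNuclear [Ring B] (σ : B → B) (c : B) (A : B × B) : Prop :=
  ∀ p q : B × B,
    dicksonMul σ c (dicksonMul σ c p A) q = dicksonMul σ c p (dicksonMul σ c A q)

@[simp]
lemma dicksonMul_inl_left [Ring B] [ZeroHomClass E B B] (σ : E) (c x : B) (p : B × B) :
    dicksonMul σ c (x, 0) p = (x * p.1, x * p.2) := by
  simp [dicksonMul]

lemma isDicksonMidNuclear_inl [CommRing B] [RingHomClass E B B] (σ : E) (c x : B) :
    IsDicksonMidNuclear σ c (x, 0) := by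
  intro p q
  simp only [dicksonMul, mul_zero, zero_mul, map_zero, add_zero, zero_add, map_mul]
  ext <;> ring

lemma IsDicksonMidNuclear.snd_eq_zero [Field B] [RingHomClass E B B] {σ : E} {c : B}
    (hc : c ≠ 0) {l : B} (hl : σ l ≠ l) {A : B × B} (hA : IsDicksonMidNuclear σ c A) :
    A.2 = 0 := by
  have h := congrArg Prod.fst (hA (l, 0) (0, 1))
  simp only [dicksonMul, mul_zero, zero_mul, map_zero, add_zero, zero_add, mul_one,
    map_mul] at h
  have h' : (σ l - l) * (c * σ A.2) = 0 := by linear_combination h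
  simpa [sub_eq_zero, hl, hc] using h'

lemma IsDicksonMidNuclear.map {B' : Type*} [Ring B] [Ring B'] {σ : B → B} {c : B}
    {σ' : B' → B'} {c' : B'} {G : B × B → B' × B'} (hG : Function.Surjective G)
    (hmul : ∀ p q, G (dicksonMul σ c p q) = dicksonMul σ' c' (G p) (G q)) {A : B × B}
    (hA : IsDicksonMidNuclear σ c A) : IsDicksonMidNuclear σ' c' (G A) := by
  intro p q
  obtain ⟨p, rfl⟩ := hG p
  obtain ⟨q, rfl⟩ := hG q
  rw [← hmul, ← hmul, ← hmul, ← hmul, hA]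

end MidNuclear

section Iso

variable {F K L : Type*} [Field F] [Field K] [Field L] [Algebra F K] [Algebra F L]
  {σ : K ≃ₐ[F] K} {c : K} {φ : L ≃ₐ[F] L} {d : L} {G : K × K → L × L}

namespace IsDicksonIso

lemma snd_apply_inl (hG : IsDicksonIso F σ c φ d G) (hφ : φ ≠ AlgEquiv.refl) (hd : d ≠ 0)
    (x : K) : (G (x, 0)).2 = 0 := by
  obtain ⟨l, hl⟩ := DFunLike.ne_iff.1 hφ
  exact ((isDicksonMidNuclear_inl σ c x).map hG.1.2 hG.2.2.2).snd_eq_zero hd hl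

lemma exists_algHom_apply_inl (hG : IsDicksonIso F σ c φ d G)
    (hinl : ∀ x, (G (x, 0)).2 = 0) : ∃ τ : K →ₐ[F] L, ∀ x, G (x, 0) = (τ x, 0) := by
  obtain ⟨hbij, hadd, hsmul, hmul⟩ := hG
  have hGx : ∀ x, G (x, 0) = ((G (x, 0)).1, 0) := fun x => Prod.ext rfl (hinl x)
  have hG1 : G (1, 0) = (1, 0) := by
    obtain ⟨p, hp⟩ := hbij.2 (1, 0)
    have h := hmul (1, 0) p
    rw [dicksonMul_inl_left, one_mul, one_mul, hp, hGx 1, dicksonMul_inl_left] at h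
    rw [hGx 1]
    simpa using h.symm
  refine ⟨{ toFun := fun x => (G (x, 0)).1
            map_one' := congrArg Prod.fst hG1
            map_mul' := fun x y => ?_
            map_zero' := congrArg Prod.fst (AddMonoidHom.mk' G hadd).map_zero
            map_add' := fun x y => by simpa using congrArg Prod.fst (hadd (x, 0) (y, 0))
            commutes' := fun a => ?_ }, hGx⟩
  · have h := hmul (x, 0) (y, 0)
    rw [hGx x, hGx y] at h
    simpa using congrArg Prod.fst h
  · simpa [hG1, Algebra.algebraMap_eq_smul_one] using congrArg Prod.fst (hsmul a (1, 0))

lemma apply_eq_of_apply_inl (hG : IsDicksonIso F σ c φ d G) {τ : K →ₐ[F] L}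
    (hτ : ∀ x, G (x, 0) = (τ x, 0)) (p : K × K) :
    G p = (τ p.1 + τ p.2 * (G (0, 1)).1, τ p.2 * (G (0, 1)).2) := by
  calc G p = G (p.1, 0) + G (dicksonMul σ c (p.2, 0) (0, 1)) := by
        rw [← hG.2.1]; simp
    _ = _ := by rw [hG.2.2.2, hτ, hτ, dicksonMul_inl_left, Prod.mk_add_mk, zero_add]

theorem exists_algEquiv (hG : IsDicksonIso F σ c φ d G) (h2 : (2 : L) ≠ 0)
    (hφ : φ ≠ AlgEquiv.refl) (hd : d ≠ 0) :
    ∃ (τ : K ≃ₐ[F] L) (b : L), b ≠ 0 ∧ (∀ x : K, φ (τ x) = τ (σ x)) ∧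
      τ c = d * φ (b ^ 2) ∧ ∀ p : K × K, G p = (τ p.1, τ p.2 * b) := by
  obtain ⟨τ, hτ⟩ := hG.exists_algHom_apply_inl (hG.snd_apply_inl hφ hd)
  have hGp := hG.apply_eq_of_apply_inl hτ
  set s := (G (0, 1)).1
  set b := (G (0, 1)).2
  have hb : b ≠ 0 := by
    intro hb
    obtain ⟨p, hp⟩ := hG.1.2 (0, 1)
    rw [hGp, hb, mul_zero] at hp
    exact zero_ne_one (congrArg Prod.snd hp)
  have hsq : ∀ x, (τ (c * σ x), 0) = dicksonMul φ d (s, b) (τ x * s, τ x * b) := by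
    intro x
    have h := hG.2.2.2 (0, 1) (0, x)
    rw [hGp (0, 1), hGp (0, x)] at h
    simpa [dicksonMul, hτ] using h
  have hs : s = 0 := by
    have h := congrArg Prod.snd (hsq 1)
    simp only [dicksonMul, map_one, one_mul] at h
    have h' : 2 * (s * b) = 0 := by linear_combination -h
    simpa [h2, hb] using h'
  have hτc : τ c = d * φ (b ^ 2) := by
    simpa [dicksonMul, hs, sq] using congrArg Prod.fst (hsq 1)
  have hsurj : Function.Surjective τ := fun u => by
    obtain ⟨p, hp⟩ := hG.1.2 (u, 0)
    rw [hGp, hs] at hp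
    exact ⟨p.1, by simpa using congrArg Prod.fst hp⟩
  have hcomm : ∀ x, φ (τ x) = τ (σ x) := fun x => by
    have h := congrArg Prod.fst (hsq x)
    simp only [dicksonMul, hs, mul_zero, zero_mul, zero_add, map_mul] at h
    have hne : d * φ (b ^ 2) ≠ 0 := by simp [hd, hb]
    refine mul_left_cancel₀ hne ?_
    rw [map_pow] at hτc ⊢
    linear_combination -h + τ (σ x) * hτc
  exact ⟨AlgEquiv.ofBijective τ ⟨τ.toRingHom.injective, hsurj⟩, b, hb, hcomm, hτc,
    fun p => by rw [hGp, hs, mul_zero, add_zero]; rfl⟩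

end IsDicksonIso

lemma isDicksonIso_of_algEquiv (τ : K ≃ₐ[F] L) {b : L} (hb : b ≠ 0)
    (hcomm : ∀ x, φ (τ x) = τ (σ x)) (hτc : τ c = d * φ (b ^ 2)) :
    IsDicksonIso F σ c φ d (fun p => (τ p.1, τ p.2 * b)) := by
  refine ⟨τ.bijective.prodMap ((mulRight_bijective₀ b hb).comp τ.bijective),
    fun p q => ?_, fun a p => ?_, fun p q => ?_⟩
  · simp [add_mul]
  · simp
  · simp only [dicksonMul, Prod.ext_iff, map_add, map_mul, ← hcomm, hτc, map_pow]
    constructor <;> ring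

end Iso

theorem stmt6_general (F K L : Type*) [Field F] [Field K] [Field L] [Algebra F K] [Algebra F L]
    (hF : ringChar F ≠ 2)
    (σ : K ≃ₐ[F] K) (φ : L ≃ₐ[F] L) (hφ : φ ≠ AlgEquiv.refl)
    (c : K) (d : L) (hd : d ≠ 0) (G : K × K → L × L) :
    IsDicksonIso F σ c φ d G ↔
      ∃ (τ : K ≃ₐ[F] L) (b : L), b ≠ 0 ∧ (∀ x : K, φ (τ x) = τ (σ x)) ∧
        τ c = d * φ (b ^ 2) ∧ ∀ p : K × K, G p = (τ p.1, τ p.2 * b) := by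
  have h2 : (2 : L) ≠ 0 := Ring.two_ne_zero (Algebra.ringChar_eq F L ▸ hF)
  refine ⟨fun hG => hG.exists_algEquiv h2 hφ hd, ?_⟩
  rintro ⟨τ, b, hb, hcomm, hτc, hGp⟩
  rw [funext hGp]
  exact isDicksonIso_of_algEquiv τ hb hcomm hτc

theorem stmt6 (F K L : Type*) [Field F] [Field K] [Field L] [Algebra F K] [Algebra F L]
    [FiniteDimensional F K] [FiniteDimensional F L] (hF : ringChar F ≠ 2)
    (σ : K ≃ₐ[F] K) (hσ : σ ≠ AlgEquiv.refl) (φ : L ≃ₐ[F] L) (hφ : φ ≠ AlgEquiv.refl)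
    (c : K) (hc : c ≠ 0) (d : L) (hd : d ≠ 0) (G : K × K → L × L) :
    IsDicksonIso F σ c φ d G ↔
      ∃ (τ : K ≃ₐ[F] L) (b : L), b ≠ 0 ∧ (∀ x : K, φ (τ x) = τ (σ x)) ∧
        τ c = d * φ (b ^ 2) ∧ ∀ p : K × K, G p = (τ p.1, τ p.2 * b) :=
  stmt6_general F K L hF σ φ hφ c d hd G
end

section
/- Let char F ≠ 2 and K/F a finite field extension with abelian automorphism group Aut_F(K). If σ, φ ∈ Aut_F(K) are nontrivial and σ ≠ φ, then D(K,σ,c) ≇ D(K,φ,d) for all c, d ∈ K^×. -/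
lemma mid_mem {F K : Type*} [Field F] [Field K] [Algebra F K]
    (σ : K ≃ₐ[F] K) (c : K) (hc : c ≠ 0) (hσ : ∃ v, σ v ≠ v) (z : K × K) :
    (∀ p q : K × K, dicksonMul (⇑σ) c (dicksonMul (⇑σ) c p z) q
        = dicksonMul (⇑σ) c p (dicksonMul (⇑σ) c z q)) ↔ z.2 = 0 := by
  constructor
  · intro H
    by_contra hb
    obtain ⟨v, hv⟩ := hσ
    have h1 := congrArg Prod.snd (H (0,1) (0,v))
    simp only [dicksonMul, map_mul] at h1
    norm_num at h1
    have hσb : σ z.2 ≠ 0 := fun h => hb (by simpa using σ.injective (h.trans (map_zero σ).symm))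
    rw [← mul_assoc] at h1
    exact hv (mul_left_cancel₀ (mul_ne_zero hc hσb) h1).symm
  · intro hb p q
    obtain ⟨a, b⟩ := z
    simp only at hb; subst hb
    simp [dicksonMul, map_mul]
    constructor <;> ring

theorem stmt7 (F K : Type*) [Field F] [Field K] [Algebra F K] [FiniteDimensional F K]
    (hF : ringChar F ≠ 2) (habel : ∀ τ τ' : K ≃ₐ[F] K, τ * τ' = τ' * τ)
    (σ φ : K ≃ₐ[F] K) (hσ : σ ≠ AlgEquiv.refl) (hφ : φ ≠ AlgEquiv.refl) (hne : σ ≠ φ)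
    (c d : K) (hc : c ≠ 0) (hd : d ≠ 0) :
    ¬ ∃ G : K × K → K × K, IsDicksonIso F σ c φ d G := by
  rintro ⟨G, ⟨hinj, hsurj⟩, hadd, hsmul, hmul⟩
  have hσ' : ∃ v, σ v ≠ v := by
    by_contra h; push_neg at h; exact hσ (AlgEquiv.ext h)
  have hφ' : ∃ v, φ v ≠ v := by
    by_contra h; push_neg at h; exact hφ (AlgEquiv.ext h)
  -- transfer of the middle nucleus
  have hG0 : ∀ z : K × K, (G z).2 = 0 ↔ z.2 = 0 := by
    intro z
    rw [← mid_mem σ c hc hσ' z, ← mid_mem φ d hd hφ' (G z)]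
    constructor
    · intro H p q
      apply hinj
      rw [hmul, hmul, hmul, hmul]
      exact H (G p) (G q)
    · intro H p' q'
      obtain ⟨p, rfl⟩ := hsurj p'
      obtain ⟨q, rfl⟩ := hsurj q'
      rw [← hmul, ← hmul, ← hmul, ← hmul, H]
  set τ : K → K := fun x => (G (x, 0)).1 with hτdef
  have hGx : ∀ x : K, G (x, 0) = (τ x, 0) := fun x =>
    Prod.ext rfl ((hG0 (x, 0)).mpr rfl)
  have hG00 : G 0 = 0 := by
    have h := hadd 0 0
    rw [add_zero] at h
    exact (add_left_cancel (show G 0 + 0 = G 0 + G 0 by rw [add_zero, ← h])).symm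
  -- τ is additive, multiplicative, F-linear, bijective
  have hτadd : ∀ x y : K, τ (x + y) = τ x + τ y := by
    intro x y
    have h := hadd (x, 0) (y, 0)
    rw [show (x, (0:K)) + (y, 0) = (x + y, 0) by simp, hGx, hGx, hGx] at h
    exact congrArg Prod.fst h
  have hτmul : ∀ x y : K, τ (x * y) = τ x * τ y := by
    intro x y
    have h := hmul (x, 0) (y, 0)
    rw [show dicksonMul (⇑σ) c (x, 0) (y, 0) = (x * y, 0) by
      simp [dicksonMul], hGx, hGx, hGx] at h
    simpa [dicksonMul] using congrArg Prod.fst h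
  have hτinj : Function.Injective τ := by
    intro x y h
    have : G (x, 0) = G (y, 0) := by rw [hGx, hGx, h]
    simpa using congrArg Prod.fst (hinj this)
  have hτsurj : Function.Surjective τ := by
    intro a
    obtain ⟨z, hz⟩ := hsurj (a, 0)
    have hz2 : z.2 = 0 := (hG0 z).mp (by rw [hz])
    refine ⟨z.1, ?_⟩
    have : G (z.1, 0) = (a, 0) := by rw [show (z.1, (0:K)) = z from (Prod.ext rfl hz2.symm), hz]
    rw [hGx] at this
    exact congrArg Prod.fst this
  have hτ0 : τ 0 = 0 := by
    have := hGx 0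
    rw [show ((0:K), (0:K)) = 0 from rfl, hG00] at this
    exact (congrArg Prod.fst this).symm
  have hτ1 : τ 1 = 1 := by
    have h := hτmul 1 1
    rw [one_mul] at h
    have h1 : τ 1 ≠ 0 := fun h0 => one_ne_zero (hτinj (h0.trans hτ0.symm))
    calc τ 1 = τ 1 * τ 1 * (τ 1)⁻¹ := by field_simp
    _ = 1 := by rw [← h]; field_simp
  have hτsmul : ∀ (a : F) (x : K), τ (a • x) = a • τ x := by
    intro a x
    have h := hsmul a (x, 0)
    rw [show a • (x, (0:K)) = (a • x, 0) by simp, hGx, hGx] at h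
    have := congrArg Prod.fst h
    simp at this; exact this
  -- package τ as an AlgEquiv
  let τr : K →+* K :=
    { toFun := τ, map_one' := hτ1, map_mul' := hτmul, map_zero' := hτ0, map_add' := hτadd }
  let τh : K →ₐ[F] K := AlgHom.mk' τr hτsmul
  let τa : K ≃ₐ[F] K := AlgEquiv.ofBijective τh ⟨hτinj, hτsurj⟩
  have hτa : ∀ x, τa x = τ x := fun x => rfl
  -- G (0,1) = (s, b)
  set s : K := (G (0, 1)).1 with hs
  set b : K := (G (0, 1)).2 with hb
  have hG01 : G (0, 1) = (s, b) := rfl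
  have hbne : b ≠ 0 := by
    intro h
    have : ((0:K), (1:K)).2 = 0 := (hG0 (0, 1)).mp h
    simp at this
  -- squares : (0,1)^2 = (c, 0)
  have hsq := hmul (0, 1) (0, 1)
  rw [show dicksonMul (⇑σ) c ((0:K), (1:K)) (0, 1) = (c, 0) by
    simp [dicksonMul], hGx, hG01] at hsq
  simp only [dicksonMul] at hsq
  have h2K : (2 : K) ≠ 0 := by
    have h2F : (2 : F) ≠ 0 := Ring.two_ne_zero hF
    intro h
    exact h2F ((algebraMap F K).injective (by rw [map_ofNat, map_zero, h]))
  have hs0 : s = 0 := by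
    have h2 : (0 : K) = s * b + b * s := congrArg Prod.snd hsq
    have : 2 * (s * b) = 0 := by linear_combination -h2
    rcases mul_eq_zero.mp this with h | h
    · exact absurd h h2K
    · exact (mul_eq_zero.mp h).resolve_right hbne
  -- G (0, x) = (0, τ x * b)
  have hG0x : ∀ x : K, G (0, x) = (0, τ x * b) := by
    intro x
    have h := hmul (x, 0) (0, 1)
    rw [show dicksonMul (⇑σ) c (x, (0:K)) (0, 1) = (0, x) by
      simp [dicksonMul], hGx, hG01] at h
    rw [h]
    simp [dicksonMul, hs0]
  -- the key functional equation
  have hkey : ∀ x : K, τ c * τ (σ x) = d * (φ (τ x) * (φ b * φ b)) := by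
    intro x
    have h := hmul (0, x) (0, 1)
    rw [show dicksonMul (⇑σ) c ((0:K), x) (0, 1) = (c * σ x, 0) by
      simp [dicksonMul], hGx, hG0x, hG01, hs0] at h
    have h1 := congrArg Prod.fst h
    simp only [dicksonMul, map_mul] at h1
    rw [hτmul] at h1
    norm_num at h1
    rw [h1]; ring
  have hτc : τ c = d * (φ b * φ b) := by
    have := hkey 1
    simpa [map_one, hτ1] using this
  have hτcne : τ c ≠ 0 := fun h => hc (hτinj (h.trans hτ0.symm))
  have hcomm : ∀ x : K, τ (σ x) = φ (τ x) := by
    intro x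
    have : τ c * τ (σ x) = τ c * φ (τ x) := by rw [hkey x, hτc]; ring
    exact mul_left_cancel₀ hτcne this
  -- conclude via abelianness
  have heq : τa * σ = φ * τa := by
    apply AlgEquiv.ext
    intro x
    show τa (σ x) = φ (τa x)
    rw [hτa, hτa]
    exact hcomm x
  have heq2 : τa * σ = τa * φ := heq.trans (habel φ τa)
  exact hne (mul_left_cancel heq2)
end

section
/- Let char F ≠ 2, K/F a finite field extension, σ ∈ Aut_F(K) nontrivial, c ∈ K^×. A map G : D(K,σ,c) → D(K,σ,c) is an F-algebra automorphism if and only if G(u,v) = (τ(u), τ(v)b) for some τ ∈ Aut_F(K) commuting with σ and some b ∈ K^× satisfying τ(c) = c·σ(b²). -/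
theorem stmt10 (F K : Type*) [Field F] [Field K] [Algebra F K] [FiniteDimensional F K]
    (hF : ringChar F ≠ 2) (σ : K ≃ₐ[F] K) (hσ : σ ≠ AlgEquiv.refl) (c : K) (hc : c ≠ 0)
    (G : K × K → K × K) :
    IsDicksonIso F σ c σ c G ↔
      ∃ (τ : K ≃ₐ[F] K) (b : K), b ≠ 0 ∧ τ * σ = σ * τ ∧
        τ c = c * σ (b ^ 2) ∧ ∀ p : K × K, G p = (τ p.1, τ p.2 * b) := by
  have h2 : (2 : K) ≠ 0 := by
    have h2F : (2 : F) ≠ 0 := Ring.two_ne_zero hF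
    have h : algebraMap F K 2 = (2 : K) := map_ofNat _ 2
    rw [← h]
    exact fun h' => h2F ((algebraMap F K).injective (by rw [h', map_zero]))
  obtain ⟨t₀, ht₀⟩ : ∃ t : K, σ t ≠ t := by
    by_contra h
    push_neg at h
    exact hσ (AlgEquiv.ext h)
  -- middle-nucleus characterization
  have hmidfull : ∀ (a : K) (x y : K × K),
      dicksonMul σ c (dicksonMul σ c x (a, 0)) y
        = dicksonMul σ c x (dicksonMul σ c (a, 0) y) := by
    intro a x y
    simp only [dicksonMul, mul_zero, zero_mul, add_zero, zero_add, map_zero]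
    rw [Prod.mk.injEq]
    constructor <;> ring_nf
  have htest : ∀ z : K × K,
      dicksonMul σ c (dicksonMul σ c (0, 1) z) (0, t₀)
        = dicksonMul σ c (0, 1) (dicksonMul σ c z (0, t₀)) → z.2 = 0 := by
    intro z h
    have h2' := congrArg Prod.snd h
    simp only [dicksonMul, mul_zero, zero_mul, add_zero, zero_add, one_mul, mul_one,
      map_zero, map_mul] at h2'
    -- h2' : c * σ z.2 * t₀ = c * (σ z.2 * σ t₀)  (roughly)
    rw [mul_assoc] at h2'
    have h3 := mul_left_cancel₀ hc h2'
    have h4 : σ z.2 * (t₀ - σ t₀) = 0 := by linear_combination h3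
    rcases mul_eq_zero.1 h4 with h' | h'
    · exact σ.injective (by rw [h', map_zero])
    · exact absurd (sub_eq_zero.1 h').symm ht₀
  constructor
  · rintro ⟨hbij, hadd, hsmul, hmul⟩
    have hG0 : G 0 = 0 := by
      have h := hadd 0 0
      rw [add_zero] at h
      exact (left_eq_add.mp h)
    have hmidG : ∀ z : K × K, z.2 = 0 → (G z).2 = 0 := by
      rintro ⟨z1, z2⟩ hz
      simp only at hz
      subst hz
      obtain ⟨x', hx'⟩ := hbij.2 ((0 : K), (1 : K))
      obtain ⟨y', hy'⟩ := hbij.2 ((0 : K), t₀)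
      apply htest
      rw [← hx', ← hy', ← hmul, ← hmul, ← hmul, ← hmul]
      exact congrArg G (hmidfull z1 x' y')
    have hmidG' : ∀ z : K × K, (G z).2 = 0 → z.2 = 0 := by
      intro z hz
      have hw : G z = ((G z).1, 0) := by rw [← hz]
      apply htest
      apply hbij.1
      rw [hmul, hmul, hmul, hmul, hw]
      exact hmidfull (G z).1 _ _
    obtain ⟨w, hw⟩ := hbij.2 ((1 : K), (0 : K))
    have hG1 : G (1, 0) = (1, 0) := by
      have h := hmul (1, 0) w
      have h1 : dicksonMul σ c ((1 : K), (0 : K)) w = w := by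
        simp [dicksonMul]
      have h1' : dicksonMul σ c (G (1, 0)) ((1 : K), (0 : K)) = G (1, 0) := by
        simp [dicksonMul]
      rw [h1, hw, h1'] at h
      exact h.symm
    have hker : ∀ u : K, (G (u, 0)).2 = 0 := fun u => hmidG (u, 0) rfl
    have hGfst : ∀ u : K, G (u, 0) = ((G (u, 0)).1, 0) := fun u => Prod.ext rfl (hker u)
    have hτmul : ∀ u x : K, (G (u * x, 0)).1 = (G (u, 0)).1 * (G (x, 0)).1 := by
      intro u x
      have h := hmul (u, 0) (x, 0)
      have hee : dicksonMul σ c (u, (0 : K)) (x, 0) = (u * x, 0) := by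
        simp [dicksonMul]
      rw [hee, hGfst u, hGfst x] at h
      rw [h]
      simp [dicksonMul]
    have hτadd : ∀ u x : K, (G (u + x, 0)).1 = (G (u, 0)).1 + (G (x, 0)).1 := by
      intro u x
      have h := hadd (u, 0) (x, 0)
      have hee : (u, (0 : K)) + (x, 0) = (u + x, 0) := by
        ext <;> simp
      rw [hee] at h
      rw [h]
      rfl
    let τA : K →ₐ[F] K :=
      { toFun := fun u => (G (u, 0)).1
        map_one' := by show (G ((1:K), (0:K))).1 = 1; rw [hG1]
        map_mul' := hτmul
        map_zero' := by show (G 0).1 = 0; rw [hG0]; rfl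
        map_add' := hτadd
        commutes' := by
          intro a
          have h := hsmul a ((1 : K), (0 : K))
          rw [hG1] at h
          have e1 : a • (((1 : K)), ((0 : K))) = ((algebraMap F K a), (0 : K)) := by
            rw [Prod.smul_mk, smul_zero, Algebra.algebraMap_eq_smul_one]
          rw [e1] at h
          show (G (algebraMap F K a, 0)).1 = algebraMap F K a
          rw [h] }
    have hτbij : Function.Bijective τA := by
      constructor
      · intro u x hux
        have h : G (u, 0) = G (x, 0) := by
          rw [hGfst u, hGfst x]
          exact congrArg (fun t => (t, (0 : K))) hux
        exact congrArg Prod.fst (hbij.1 h)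
      · intro v
        obtain ⟨z, hz⟩ := hbij.2 (v, 0)
        have hz2 : z.2 = 0 := hmidG' z (by rw [hz])
        refine ⟨z.1, ?_⟩
        show (G (z.1, 0)).1 = v
        have hzz : (z.1, (0 : K)) = z := by rw [← hz2]
        rw [hzz, hz]
    let τ : K ≃ₐ[F] K := AlgEquiv.ofBijective τA hτbij
    have hτ : ∀ u : K, τ u = (G (u, 0)).1 := fun u => rfl
    set b : K := (G (0, 1)).2 with hbdef
    have hbne : b ≠ 0 := by
      intro h
      have := hmidG' (0, 1) h
      exact one_ne_zero this
    have hσb : σ b ≠ 0 := fun h => hbne (σ.injective (by rw [h, map_zero]))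
    have hsq := hmul ((0 : K), (1 : K)) ((0 : K), (1 : K))
    have hee : dicksonMul σ c ((0 : K), (1 : K)) ((0 : K), (1 : K)) = (c, 0) := by
      simp [dicksonMul]
    rw [hee, hGfst c] at hsq
    have hGe : G ((0 : K), (1 : K)) = ((G ((0:K), (1:K))).1, b) := rfl
    rw [hGe] at hsq
    simp only [dicksonMul] at hsq
    have hs2 := congrArg Prod.snd hsq
    simp only at hs2
    -- hs2 : 0 = p * b + b * p
    have hpb : (G ((0:K), (1:K))).1 * b = 0 := by
      have h2' : (2 : K) * ((G ((0:K), (1:K))).1 * b) = 0 := by linear_combination (-1 : K) * hs2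
      exact (mul_eq_zero.1 h2').resolve_left h2
    have hp0 : (G ((0:K), (1:K))).1 = 0 := (mul_eq_zero.1 hpb).resolve_right hbne
    have hcform : τ c = c * σ (b ^ 2) := by
      have h1' := congrArg Prod.fst hsq
      simp only at h1'
      rw [hτ, h1', hp0, pow_two]
      ring
    have hGsnd : ∀ v : K, G (0, v) = (0, (G (v, 0)).1 * b) := by
      intro v
      have he : dicksonMul σ c (v, (0 : K)) ((0 : K), (1 : K)) = (0, v) := by
        simp [dicksonMul]
      have h := hmul (v, 0) (0, 1)
      rw [he, hGfst v, hGe, hp0] at h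
      rw [h]
      simp [dicksonMul]
    have hcomm : ∀ x : K, τ (σ x) = σ (τ x) := by
      intro x
      have h := hmul ((0 : K), (1 : K)) ((0 : K), x)
      have he : dicksonMul σ c ((0 : K), (1 : K)) ((0 : K), x) = (c * σ x, 0) := by
        simp [dicksonMul]
      rw [he, hGfst (c * σ x), hGe, hp0, hGsnd x] at h
      have h1' := congrArg Prod.fst h
      simp only [dicksonMul, map_mul] at h1'
      -- h1' : (G (c * σ x, 0)).1 = 0 * 0 + c * (σ b * (σ (G (x,0)).1 * σ b))
      have hmc : (G (c * σ x, 0)).1 = τ c * τ (σ x) := by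
        rw [hτ, hτmul c (σ x)]
        rfl
      rw [hmc, hcform] at h1'
      have hcb2 : c * σ (b ^ 2) ≠ 0 := by
        apply mul_ne_zero hc
        intro hh
        have hb2 : b ^ 2 = 0 := σ.injective (by rw [hh, map_zero])
        exact hbne ((pow_eq_zero_iff (two_ne_zero)).mp hb2)
      apply mul_left_cancel₀ hcb2
      rw [h1']
      rw [hτ]
      rw [pow_two, map_mul]
      ring
    refine ⟨τ, b, hbne, ?_, ?_, ?_⟩
    · apply AlgEquiv.ext
      intro x
      rw [AlgEquiv.mul_apply, AlgEquiv.mul_apply]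
      exact hcomm x
    · exact hcform
    · intro q
      have h := hadd (q.1, 0) (0, q.2)
      have hq : (q.1, (0 : K)) + ((0 : K), q.2) = q := by
        ext <;> simp
      rw [hq, hGfst q.1, hGsnd q.2] at h
      rw [h]
      ext <;> simp [hτ]
  · rintro ⟨τ, b, hb, hcom, hcb, hform⟩
    have hcomw : ∀ x : K, τ (σ x) = σ (τ x) := by
      intro x
      have h := congrArg (fun e : K ≃ₐ[F] K => e x) hcom
      simpa [AlgEquiv.mul_apply] using h
    refine ⟨?_, ?_, ?_, ?_⟩
    · constructor
      · intro p q hpq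
        rw [hform p, hform q, Prod.mk.injEq] at hpq
        obtain ⟨h1, h2⟩ := hpq
        have e1 : p.1 = q.1 := τ.injective h1
        have e2 : p.2 = q.2 := τ.injective (mul_right_cancel₀ hb h2)
        exact Prod.ext e1 e2
      · intro q
        refine ⟨(τ.symm q.1, τ.symm (q.2 * b⁻¹)), ?_⟩
        rw [hform]
        simp only
        rw [AlgEquiv.apply_symm_apply, AlgEquiv.apply_symm_apply]
        rw [inv_mul_cancel_right₀ hb]
    · intro p q
      rw [hform, hform, hform]
      apply Prod.ext <;> simp [map_add, add_mul]
    · intro a p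
      rw [hform, hform]
      apply Prod.ext <;> simp [map_smul, smul_mul_assoc]
    · intro p q
      rw [hform, hform, hform]
      simp only [dicksonMul]
      apply Prod.ext <;> simp only [map_add, map_mul, hcomw, hcb, map_pow]
      · ring
      · ring
end

section
/- Let char F ≠ 2, K/F finite, σ ∈ Aut_F(K) nontrivial, c ∈ K^×. The automorphism group of D(K,σ,c) has exactly 2·|J(c) ∩ C(σ)| elements, where C(σ) is the centralizer of σ in Aut_F(K) and J(c) = {τ : τ(c)c⁻¹ ∈ K^{×2}}. -/
/-! Since `σ ≠ 1`, the middle nucleus of `D(K,σ,c)` is `K × 0`, and every automorphism `G`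
preserves it. So `G` restricts to some `τ ∈ Aut_F(K)` on `K × 0`, and once `G (0,1) = (0,b)` is
known (squaring `(0,1)` and `char ≠ 2` kill the first coordinate), `G (x,y) = (τ x, τ y * b)`.
Such a map is multiplicative exactly when `τ` commutes with `σ` and `c σ(b²) = τ c`, i.e.
`σ(b)² = τ(c) c⁻¹`, and for each such `τ` this has exactly the two solutions `±b`. -/

section DicksonMul

variable {B : Type*} [Ring B]

lemma dicksonMul_inl_left_s11 {σ : B → B} (hσ : σ 0 = 0) (c x : B) (q : B × B) :
    dicksonMul σ c (x, 0) q = (x * q.1, x * q.2) := by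
  simp [dicksonMul, hσ]

lemma dicksonMul_inl_right {σ : B → B} (hσ : σ 0 = 0) (c : B) (p : B × B) (x : B) :
    dicksonMul σ c p (x, 0) = (p.1 * x, p.2 * x) := by
  simp [dicksonMul, hσ]

def IsMiddleNuclear (σ : B → B) (c : B) (z : B × B) : Prop :=
  ∀ p q, dicksonMul σ c (dicksonMul σ c p z) q = dicksonMul σ c p (dicksonMul σ c z q)

lemma isMiddleNuclear_map_iff {L : Type*} [Ring L] {σ : B → B} {c : B} {φ : L → L} {d : L}
    {G : B × B → L × L} (hG : Function.Bijective G)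
    (hmul : ∀ p q, G (dicksonMul σ c p q) = dicksonMul φ d (G p) (G q)) {z : B × B} :
    IsMiddleNuclear φ d (G z) ↔ IsMiddleNuclear σ c z := by
  refine ⟨fun h p q => hG.1 ?_, fun h p q => ?_⟩
  · rw [hmul, hmul, hmul, hmul]
    exact h _ _
  · obtain ⟨p, rfl⟩ := hG.2 p
    obtain ⟨q, rfl⟩ := hG.2 q
    rw [← hmul, ← hmul, ← hmul, ← hmul, h]

end DicksonMul

lemma Nat.card_sigma_of_card_eq {ι : Type*} {β : ι → Type*} {n : ℕ} (hn : n ≠ 0)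
    (h : ∀ i, Nat.card (β i) = n) : Nat.card (Σ i, β i) = Nat.card ι * n := by
  have (i : ι) : Finite (β i) := Nat.finite_of_card_ne_zero (h i ▸ hn)
  rw [Nat.card_congr ((Equiv.sigmaCongrRight fun i => Finite.equivFinOfCardEq (h i)).trans
    (Equiv.sigmaEquivProd _ _)), Nat.card_prod, Nat.card_fin]

lemma card_sq_eq_sq {R : Type*} [CommRing R] [NoZeroDivisors R] (h2 : (2 : R) ≠ 0) {r : R}
    (hr : r ≠ 0) : Nat.card {x : R // x ^ 2 = r ^ 2} = 2 := by
  have hne : r ≠ -r := fun h => hr (by simpa [h2] using (by linear_combination h : 2 * r = 0))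
  calc Nat.card {x : R // x ^ 2 = r ^ 2} = Nat.card ({r, -r} : Set R) :=
        Nat.card_congr (Equiv.subtypeEquivRight fun _ => sq_eq_sq_iff_eq_or_eq_neg)
    _ = 2 := by rw [Nat.card_coe_set_eq, Set.ncard_pair hne]

section Dickson

variable {F K : Type*} [Field F] [Field K] [Algebra F K] {σ : K ≃ₐ[F] K} {c : K}

lemma isMiddleNuclear_iff (hσ : σ ≠ AlgEquiv.refl) (hc : c ≠ 0) {z : K × K} :
    IsMiddleNuclear σ c z ↔ z.2 = 0 := by
  refine ⟨fun hz => ?_, fun hz p q => ?_⟩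
  · obtain ⟨e, he⟩ : ∃ e, σ e ≠ e := by
      by_contra! h
      exact hσ (AlgEquiv.ext h)
    have h := congrArg Prod.fst (hz (0, 1) (e, 0))
    simp only [dicksonMul, zero_mul, one_mul, mul_zero, map_zero, map_mul, zero_add,
      add_zero] at h
    have : c * σ z.2 * (e - σ e) = 0 := by linear_combination h
    simpa [hc, sub_eq_zero, he.symm] using this
  · obtain ⟨s, z⟩ := z
    obtain rfl : z = 0 := hz
    simp only [dicksonMul, Prod.mk.injEq, mul_zero, zero_mul, map_zero, add_zero, zero_add,
      map_mul]
    constructor <;> ring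

def dicksonMap (τ : K ≃ₐ[F] K) (b : K) (p : K × K) : K × K := (τ p.1, τ p.2 * b)

lemma dicksonMap_injective {τ τ' : K ≃ₐ[F] K} {b b' : K} (h : dicksonMap τ b = dicksonMap τ' b') :
    τ = τ' ∧ b = b' :=
  ⟨AlgEquiv.ext fun x => congrArg Prod.fst (congrFun h (x, 0)),
    by simpa [dicksonMap] using congrArg Prod.snd (congrFun h (0, 1))⟩

lemma isDicksonIso_dicksonMap_iff (hc : c ≠ 0) {τ : K ≃ₐ[F] K} {b : K} :
    IsDicksonIso F σ c σ c (dicksonMap τ b) ↔ τ * σ = σ * τ ∧ c * σ (b * b) = τ c := by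
  refine ⟨fun hG => ?_, fun ⟨hcomm, hb⟩ => ?_⟩
  · have hb : c * σ (b * b) = τ c := by
      simpa [dicksonMap, dicksonMul] using (congrArg Prod.fst (hG.2.2.2 (0, 1) (0, 1))).symm
    refine ⟨AlgEquiv.ext fun y => mul_left_cancel₀ ((map_ne_zero τ).2 hc) ?_, hb⟩
    have h := congrArg Prod.fst (hG.2.2.2 (0, 1) (0, y))
    simp only [dicksonMap, dicksonMul, mul_zero, one_mul, zero_add, zero_mul, add_zero, map_mul,
      map_zero, map_one] at h
    rw [AlgEquiv.mul_apply, AlgEquiv.mul_apply, h, ← hb, map_mul]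
    ring
  · have hcomm (x : K) : τ (σ x) = σ (τ x) := DFunLike.congr_fun hcomm x
    have hb0 : b ≠ 0 := by
      rintro rfl
      exact hc (by simpa using hb.symm)
    refine ⟨Function.bijective_iff_has_inverse.2
      ⟨fun q => (τ.symm q.1, τ.symm (q.2 * b⁻¹)), fun p => ?_, fun q => ?_⟩, ?_, ?_, ?_⟩
    · simp [dicksonMap, hb0]
    · simp [dicksonMap, hb0]
    · intro p q
      simp [dicksonMap, add_mul]
    · intro a p
      simp [dicksonMap]
    · intro p q
      simp only [dicksonMap, dicksonMul, Prod.mk.injEq, map_add, map_mul, hcomm, ← hb]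
      constructor <;> ring

namespace IsDicksonIso

variable {G : K × K → K × K}

lemma map_inl_one (hG : IsDicksonIso F σ c σ c G) : G (1, 0) = (1, 0) := by
  obtain ⟨p, hp⟩ := hG.1.2 (1, 0)
  calc G (1, 0) = dicksonMul σ c (G p) (G (1, 0)) := by
        rw [hp, dicksonMul_inl_left_s11 (map_zero σ)]; simp
    _ = (1, 0) := by
        rw [← hG.2.2.2, dicksonMul_inl_right (map_zero σ), mul_one, mul_one, Prod.mk.eta, hp]

lemma snd_eq_zero_iff (hσ : σ ≠ AlgEquiv.refl) (hc : c ≠ 0) (hG : IsDicksonIso F σ c σ c G)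
    {z : K × K} : (G z).2 = 0 ↔ z.2 = 0 := by
  rw [← isMiddleNuclear_iff hσ hc, ← isMiddleNuclear_iff hσ hc]
  exact isMiddleNuclear_map_iff hG.1 hG.2.2.2

lemma exists_algEquiv_map_inl (hσ : σ ≠ AlgEquiv.refl) (hc : c ≠ 0)
    (hG : IsDicksonIso F σ c σ c G) : ∃ τ : K ≃ₐ[F] K, ∀ x, G (x, 0) = (τ x, 0) := by
  obtain ⟨t, ht⟩ : ∃ t : K → K, ∀ x, G (x, 0) = (t x, 0) :=
    ⟨_, fun x => Prod.ext rfl ((snd_eq_zero_iff hσ hc hG).2 rfl)⟩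
  let f : K →ₗ[F] K :=
    { toFun := t
      map_add' := fun x y => by simpa [ht] using congrArg Prod.fst (hG.2.1 (x, 0) (y, 0))
      map_smul' := fun a x => by simpa [ht] using congrArg Prod.fst (hG.2.2.1 a (x, 0)) }
  let τ : K →ₐ[F] K := AlgHom.ofLinearMap f
    (by simpa [f, ht] using congrArg Prod.fst hG.map_inl_one)
    (fun x y => by
      simpa [f, ht, dicksonMul_inl_left_s11] using congrArg Prod.fst (hG.2.2.2 (x, 0) (y, 0)))
  have hτ : Function.Bijective τ := by
    refine ⟨fun x y hxy => ?_, fun y => ?_⟩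
    · simpa using hG.1.1 (show G (x, 0) = G (y, 0) by rw [ht, ht]; exact congrArg (·, 0) hxy)
    · obtain ⟨⟨x, z⟩, hx⟩ := hG.1.2 (y, 0)
      obtain rfl : z = 0 := (snd_eq_zero_iff hσ hc hG).1 (by rw [hx])
      exact ⟨x, by simpa [τ, f, ht] using hx⟩
  exact ⟨AlgEquiv.ofBijective τ hτ, ht⟩

lemma exists_eq_dicksonMap (h2 : (2 : K) ≠ 0) (hσ : σ ≠ AlgEquiv.refl) (hc : c ≠ 0)
    (hG : IsDicksonIso F σ c σ c G) : ∃ (τ : K ≃ₐ[F] K) (b : K), G = dicksonMap τ b := by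
  obtain ⟨τ, hτ⟩ := hG.exists_algEquiv_map_inl hσ hc
  obtain ⟨s, b, hsb⟩ : ∃ s b, G (0, 1) = (s, b) := ⟨_, _, rfl⟩
  have hb : b ≠ 0 := by
    rintro rfl
    exact one_ne_zero ((snd_eq_zero_iff hσ hc hG (z := (0, 1))).1 (by rw [hsb]))
  have hs : s = 0 := by
    have h := congrArg Prod.snd (hG.2.2.2 (0, 1) (0, 1))
    simp only [dicksonMul, mul_zero, mul_one, map_one, zero_add, add_zero, hτ, hsb,
      map_mul] at h
    have : s * (2 * b) = 0 := by linear_combination -h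
    simpa [h2, hb] using this
  refine ⟨τ, b, funext fun p => ?_⟩
  calc G p = G ((p.1, 0) + dicksonMul σ c (p.2, 0) (0, 1)) := by
        simp [dicksonMul_inl_left_s11]
    _ = dicksonMap τ b p := by
        rw [hG.2.1, hG.2.2.2, hτ, hτ, hsb, hs, dicksonMul_inl_left_s11 (map_zero σ)]
        simp [dicksonMap]

end IsDicksonIso

lemma card_mul_map_mul_self_eq (h2 : (2 : K) ≠ 0) (hc : c ≠ 0) {τ : K ≃ₐ[F] K}
    (hτ : ∃ x, τ c * c⁻¹ = x ^ 2) : Nat.card {b : K // c * σ (b * b) = τ c} = 2 := by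
  obtain ⟨r, hr⟩ := hτ
  have hr0 : r ≠ 0 := by
    rintro rfl
    simp [hc] at hr
  rw [← card_sq_eq_sq h2 hr0]
  refine Nat.card_congr (σ.toEquiv.subtypeEquiv fun b => ?_)
  rw [← hr, AlgEquiv.toEquiv_eq_coe, EquivLike.coe_coe, map_mul, ← sq, eq_mul_inv_iff_mul_eq₀ hc,
    mul_comm]

noncomputable def isDicksonIsoEquivSigma (h2 : (2 : K) ≠ 0) (hσ : σ ≠ AlgEquiv.refl)
    (hc : c ≠ 0) :
    {G : K × K → K × K // IsDicksonIso F σ c σ c G} ≃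
      Σ τ : {τ : K ≃ₐ[F] K // τ * σ = σ * τ ∧ ∃ x : K, τ c * c⁻¹ = x ^ 2},
        {b : K // c * σ (b * b) = τ.1 c} :=
  .symm <| .ofBijective
    (fun x => ⟨dicksonMap x.1 x.2, (isDicksonIso_dicksonMap_iff hc).2 ⟨x.1.2.1, x.2.2⟩⟩) <| by
    refine ⟨?_, fun ⟨G, hG⟩ => ?_⟩
    · rintro ⟨⟨τ, hτ⟩, ⟨b, hb⟩⟩ ⟨⟨τ', hτ'⟩, ⟨b', hb'⟩⟩ h
      obtain ⟨rfl, rfl⟩ := dicksonMap_injective (congrArg Subtype.val h)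
      rfl
    · obtain ⟨τ, b, rfl⟩ := hG.exists_eq_dicksonMap h2 hσ hc
      obtain ⟨hcomm, hb⟩ := (isDicksonIso_dicksonMap_iff hc).1 hG
      refine ⟨⟨⟨τ, hcomm, σ b, ?_⟩, ⟨b, hb⟩⟩, rfl⟩
      rw [← hb, map_mul, ← sq, mul_comm, inv_mul_cancel_left₀ hc]

end Dickson

theorem stmt11_general (F K : Type*) [Field F] [Field K] [Algebra F K]
    (hF : ringChar F ≠ 2) (σ : K ≃ₐ[F] K) (hσ : σ ≠ AlgEquiv.refl) (c : K) (hc : c ≠ 0) :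
    Nat.card {G : K × K → K × K // IsDicksonIso F σ c σ c G}
      = 2 * Nat.card {τ : K ≃ₐ[F] K //
          τ * σ = σ * τ ∧ ∃ x : K, τ c * c⁻¹ = x ^ 2} := by
  have h2 : (2 : K) ≠ 0 := Ring.two_ne_zero (by rwa [← Algebra.ringChar_eq F K])
  rw [Nat.card_congr (isDicksonIsoEquivSigma h2 hσ hc),
    Nat.card_sigma_of_card_eq two_ne_zero fun τ => card_mul_map_mul_self_eq h2 hc τ.2.2, mul_comm]

theorem stmt11 (F K : Type*) [Field F] [Field K] [Algebra F K] [FiniteDimensional F K]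
    (hF : ringChar F ≠ 2) (σ : K ≃ₐ[F] K) (hσ : σ ≠ AlgEquiv.refl) (c : K) (hc : c ≠ 0) :
    Nat.card {G : K × K → K × K // IsDicksonIso F σ c σ c G}
      = 2 * Nat.card {τ : K ≃ₐ[F] K //
          τ * σ = σ * τ ∧ ∃ x : K, τ c * c⁻¹ = x ^ 2} :=
  stmt11_general F K hF σ hσ c hc
end

section
/- Let char F ≠ 2 and c ∈ F^×, K/F finite, σ ∈ Aut_F(K) nontrivial. Then D(K,σ,c) has exactly 2·|C(σ)| automorphisms, where C(σ) is the centralizer of σ in Aut_F(K). -/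
def middleNucleus {X : Type*} (m : X → X → X) : Set X :=
  {q | ∀ a b, m (m a q) b = m a (m q b)}

section Magma

variable {X Y : Type*} {m : X → X → X} {m' : Y → Y → Y} {G : X → Y}

theorem Function.Surjective.apply_leftId_eq_rightId (hG : Function.Surjective G)
    (hmul : ∀ p q, G (m p q) = m' (G p) (G q)) {e : X} {e' : Y} (he : ∀ x, m e x = x)
    (he' : ∀ y, m' y e' = y) : G e = e' := by
  obtain ⟨q, rfl⟩ := hG e'
  rw [← he' (G e), ← hmul, he]

theorem Function.Bijective.apply_mem_middleNucleus_iff (hG : Function.Bijective G)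
    (hmul : ∀ p q, G (m p q) = m' (G p) (G q)) {q : X} :
    G q ∈ middleNucleus m' ↔ q ∈ middleNucleus m := by
  simp only [middleNucleus, Set.mem_ofPred_eq, hG.surjective.forall, ← hmul, hG.injective.eq_iff]

end Magma

section DicksonMul

variable {R S : Type*} [Field R] [FunLike S R R] [RingHomClass S R R]

theorem mem_middleNucleus_dicksonMul_iff {σ : S} (hσ : ∃ w, σ w ≠ w) {c : R} (hc : c ≠ 0)
    {q : R × R} : q ∈ middleNucleus (dicksonMul σ c) ↔ q.2 = 0 := by
  constructor
  · intro hq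
    obtain ⟨w, hw⟩ := hσ
    -- the associator of `(0,1)`, `q`, `(0,w)` has second coordinate `c σ(q.2) (w - σ w)`
    have key := congrArg Prod.snd (hq (0, 1) (0, w))
    simp only [dicksonMul, map_mul, map_one] at key
    have : c * σ q.2 * (w - σ w) = 0 := by linear_combination key
    simpa [hc, sub_eq_zero, Ne.symm hw, map_eq_zero] using this
  · intro hq a b
    simp only [dicksonMul, hq, mul_zero, zero_mul, map_zero, map_mul, add_zero, zero_add]
    exact Prod.ext (by ring) (by ring)

end DicksonMul

section Aut

variable {F K : Type*} [Field F] [Field K] [Algebra F K] {σ : K ≃ₐ[F] K} {c : K}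

theorem isDicksonIso_of_commute {τ : K ≃ₐ[F] K} (hτ : τ * σ = σ * τ) (hτc : τ c = c) {k : K}
    (hk : k * k = 1) : IsDicksonIso F σ c σ c (fun p => (τ p.1, k * τ p.2)) := by
  have hcomm (x : K) : τ (σ x) = σ (τ x) := DFunLike.congr_fun hτ x
  have hkk (a b : K) : k * a * (k * b) = a * b := by linear_combination (a * b) * hk
  have hk0 : k ≠ 0 := left_ne_zero_of_mul_eq_one hk
  refine ⟨⟨?_, ?_⟩, ?_, ?_, ?_⟩
  · rintro ⟨u, v⟩ ⟨x, y⟩ h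
    simp only [Prod.mk.injEq, mul_right_inj' hk0, τ.injective.eq_iff] at h
    rw [h.1, h.2]
  · rintro ⟨u, v⟩
    exact ⟨(τ.symm u, τ.symm (k * v)), by simp [← mul_assoc, hk]⟩
  · intro p q
    simp only [Prod.fst_add, Prod.snd_add, map_add, mul_add, Prod.mk_add_mk]
  · intro a p
    simp only [Prod.smul_fst, Prod.smul_snd, map_smul, mul_smul_comm, Prod.smul_mk]
  · intro p q
    simp only [dicksonMul, map_add, map_mul, hcomm, hτc, hkk]
    exact Prod.ext rfl (by ring)

namespace IsDicksonIso

variable {G : K × K → K × K} (hG : IsDicksonIso F σ c σ c G)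
include hG

theorem apply_one_zero : G (1, 0) = (1, 0) :=
  hG.1.2.apply_leftId_eq_rightId hG.2.2.2 (fun _ => by simp [dicksonMul])
    (fun _ => by simp [dicksonMul])

theorem snd_apply_eq_zero_iff (hσ : ∃ w, σ w ≠ w) (hc : c ≠ 0) {q : K × K} :
    (G q).2 = 0 ↔ q.2 = 0 := by
  rw [← mem_middleNucleus_dicksonMul_iff hσ hc, hG.1.apply_mem_middleNucleus_iff hG.2.2.2,
    mem_middleNucleus_dicksonMul_iff hσ hc]

theorem exists_algEquiv_apply_fst (hσ : ∃ w, σ w ≠ w) (hc : c ≠ 0) :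
    ∃ τ : K ≃ₐ[F] K, ∀ u, G (u, 0) = (τ u, 0) := by
  have hfst (u : K) : G (u, 0) = ((G (u, 0)).1, 0) :=
    Prod.ext rfl ((hG.snd_apply_eq_zero_iff hσ hc).2 rfl)
  let Gₗ : (K × K) →ₗ[F] (K × K) := ⟨⟨G, hG.2.1⟩, hG.2.2.1⟩
  let τ : K →ₐ[F] K := AlgHom.ofLinearMap (LinearMap.fst F K K ∘ₗ Gₗ ∘ₗ LinearMap.inl F K K)
    (by simp [Gₗ, hG.apply_one_zero])
    (fun u v => by
      have := congrArg Prod.fst (hG.2.2.2 (u, 0) (v, 0))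
      rw [hfst u, hfst v] at this
      simpa [dicksonMul, Gₗ] using this)
  refine ⟨AlgEquiv.ofBijective τ ⟨fun u v h => ?_, fun y => ?_⟩, hfst⟩
  · have : G (u, 0) = G (v, 0) := by rw [hfst u, hfst v]; exact congrArg (·, 0) h
    simpa using congrArg Prod.fst (hG.1.1 this)
  · obtain ⟨q, hq⟩ := hG.1.2 (y, 0)
    have hq2 : q.2 = 0 := (hG.snd_apply_eq_zero_iff hσ hc).1 (by rw [hq])
    refine ⟨q.1, ?_⟩
    simp [τ, Gₗ, ← hq2, hq]

theorem apply_zero_one (hσ : ∃ w, σ w ≠ w) (hc : c ≠ 0) (h2 : (2 : K) ≠ 0) {τ : K ≃ₐ[F] K}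
    (hτ : ∀ u, G (u, 0) = (τ u, 0)) (hτc : τ c = c) : ∃ k, k * k = 1 ∧ G (0, 1) = (0, k) := by
  rcases hj : G (0, 1) with ⟨h, k⟩
  have hk0 : k ≠ 0 := by
    intro hk
    simpa using (hG.snd_apply_eq_zero_iff hσ hc (q := (0, 1))).1 (by rw [hj, hk])
  have hsq := hG.2.2.2 (0, 1) (0, 1)
  simp only [dicksonMul, mul_zero, mul_one, map_one, zero_add, add_zero, hj] at hsq
  rw [hτ, hτc, Prod.mk.injEq] at hsq
  have hh : h = 0 := by
    have : 2 * h * k = 0 := by linear_combination -hsq.2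
    simpa [h2, hk0] using this
  have hσk : σ (k * k) = σ 1 := by
    rw [map_one]
    apply mul_left_cancel₀ hc
    linear_combination -hsq.1 - h * hh
  exact ⟨k, σ.injective hσk, by rw [hh]⟩

theorem exists_eq_of_commute (hσ : ∃ w, σ w ≠ w) (hc : c ≠ 0) (hcF : ∀ τ : K ≃ₐ[F] K, τ c = c)
    (h2 : (2 : K) ≠ 0) : ∃ τ : K ≃ₐ[F] K, τ * σ = σ * τ ∧
      ∃ k : K, k * k = 1 ∧ G = fun p => (τ p.1, k * τ p.2) := by
  obtain ⟨τ, hτ⟩ := hG.exists_algEquiv_apply_fst hσ hc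
  obtain ⟨k, hk, hj⟩ := hG.apply_zero_one hσ hc h2 hτ (hcF τ)
  have hsnd (v : K) : G (0, v) = (0, k * τ v) := by
    have := hG.2.2.2 (0, 1) (v, 0)
    simpa [dicksonMul, hj, hτ] using this
  refine ⟨τ, ?_, k, hk, funext fun p => ?_⟩
  · ext x
    have := congrArg Prod.fst (hG.2.2.2 (0, x) (0, 1))
    have hσk : σ k * σ k = 1 := by rw [← map_mul, hk, map_one]
    simp only [dicksonMul, hsnd, hτ, zero_mul, mul_zero, zero_add, add_zero, map_mul, map_one,
      mul_one, hcF] at this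
    apply mul_left_cancel₀ hc
    simp only [AlgEquiv.mul_apply]
    linear_combination this + c * σ (τ x) * hσk
  · obtain ⟨u, v⟩ := p
    have huv : ((u, v) : K × K) = (u, 0) + (0, v) := by simp
    rw [huv, hG.2.1, hτ, hsnd]
    simp

end IsDicksonIso

theorem card_isDicksonIso (hσ : ∃ w, σ w ≠ w) (hc : c ≠ 0) (hcF : ∀ τ : K ≃ₐ[F] K, τ c = c)
    (h2 : (2 : K) ≠ 0) :
    Nat.card {G // IsDicksonIso F σ c σ c G} =
      Nat.card {τ : K ≃ₐ[F] K // τ * σ = σ * τ} * Nat.card {k : K // k * k = 1} := by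
  rw [← Nat.card_prod]
  refine Nat.card_congr (Equiv.ofBijective (fun x => ⟨fun p => (x.1.1 p.1, x.2.1 * x.1.1 p.2),
    isDicksonIso_of_commute x.1.2 (hcF _) x.2.2⟩) ⟨?_, ?_⟩).symm
  · rintro ⟨⟨τ, hτ⟩, ⟨k, hk⟩⟩ ⟨⟨τ', hτ'⟩, ⟨k', hk'⟩⟩ h
    have hG := congrArg Subtype.val h
    obtain rfl : τ = τ' := AlgEquiv.ext fun u => congrArg Prod.fst (congrFun hG (u, 0))
    obtain rfl : k = k' := by simpa using congrArg Prod.snd (congrFun hG (0, 1))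
    rfl
  · rintro ⟨G, hG⟩
    obtain ⟨τ, hτ, k, hk, rfl⟩ := hG.exists_eq_of_commute hσ hc hcF h2
    exact ⟨(⟨τ, hτ⟩, ⟨k, hk⟩), rfl⟩

end Aut

theorem card_mul_self_eq_one {K : Type*} [Field K] (h2 : (2 : K) ≠ 0) :
    Nat.card {k : K // k * k = 1} = 2 := by
  have h1 : (1 : K) ≠ -1 := fun h => h2 (by linear_combination h)
  rw [← Set.ncard_pair h1, ← Nat.card_coe_set_eq]
  simp only [mul_self_eq_one_iff]
  rfl

theorem stmt12_general (F K : Type*) [Field F] [Field K] [Algebra F K]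
    (hF : ringChar F ≠ 2) (σ : K ≃ₐ[F] K) (hσ : σ ≠ AlgEquiv.refl)
    (c : K) (c₀ : F) (hc₀ : c₀ ≠ 0) (hc : c = algebraMap F K c₀) :
    Nat.card {G : K × K → K × K // IsDicksonIso F σ c σ c G}
      = 2 * Nat.card {τ : K ≃ₐ[F] K // τ * σ = σ * τ} := by
  have h2 : (2 : K) ≠ 0 := Ring.two_ne_zero (Algebra.ringChar_eq F K ▸ hF)
  have hσ' : ∃ w, σ w ≠ w := DFunLike.ne_iff.1 hσ
  have hc0 : c ≠ 0 := by simpa [hc] using hc₀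
  have hcF (τ : K ≃ₐ[F] K) : τ c = c := hc ▸ τ.commutes c₀
  rw [card_isDicksonIso hσ' hc0 hcF h2, card_mul_self_eq_one h2, mul_comm]

theorem stmt12 (F K : Type*) [Field F] [Field K] [Algebra F K] [FiniteDimensional F K]
    (hF : ringChar F ≠ 2) (σ : K ≃ₐ[F] K) (hσ : σ ≠ AlgEquiv.refl)
    (c : K) (c₀ : F) (hc₀ : c₀ ≠ 0) (hc : c = algebraMap F K c₀) :
    Nat.card {G : K × K → K × K // IsDicksonIso F σ c σ c G}
      = 2 * Nat.card {τ : K ≃ₐ[F] K // τ * σ = σ * τ} :=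
  stmt12_general F K hF σ hσ c c₀ hc₀ hc
end

section
/- Let B be a central simple algebra over F, σ ∈ Aut_F(B) nontrivial, c ∈ B^×. The commuter of D(B,σ,c) (and of D_r(B,σ,c)) equals F ⊕ F. The commuter of D_m(B,σ,c) equals F ⊕ F if c ∈ F^×, and equals F ⊕ 0 otherwise. -/
/-- The Dickson doubling multiplication on `B ⊕ B` (coefficient in the middle). -/
def dicksonMulM {B : Type*} [Ring B] (σ : B → B) (c : B) (p q : B × B) : B × B :=
  (p.1 * q.1 + σ p.2 * c * σ q.2, p.1 * q.2 + p.2 * q.1)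

/-- The Dickson doubling multiplication on `B ⊕ B` (coefficient on the right). -/
def dicksonMulR {B : Type*} [Ring B] (σ : B → B) (c : B) (p q : B × B) : B × B :=
  (p.1 * q.1 + σ (p.2 * q.2) * c, p.1 * q.2 + p.2 * q.1)

private lemma mem_range_of_comm {F B : Type*} [Field F] [Ring B] [Algebra F B]
    [Algebra.IsCentral F B] {u : B} (h : ∀ x : B, u * x = x * u) :
    u ∈ Set.range (algebraMap F B) := by
  have : u ∈ Subalgebra.center F B := Subalgebra.mem_center_iff.mpr fun b => (h b).symm
  have := Algebra.IsCentral.out (K := F) (D := B) this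
  rcases this with ⟨a, ha⟩
  exact ⟨a, ha⟩

theorem stmt17 (F B : Type*) [Field F] [Ring B] [Algebra F B] [FiniteDimensional F B]
    [Algebra.IsCentral F B] [IsSimpleRing B]
    (σ : B ≃ₐ[F] B) (hσ : σ ≠ AlgEquiv.refl) (c : B) (hc : IsUnit c) :
    {x : B × B | ∀ y : B × B, dicksonMul σ c x y = dicksonMul σ c y x}
        = {x : B × B | x.1 ∈ Set.range (algebraMap F B) ∧ x.2 ∈ Set.range (algebraMap F B)} ∧
    {x : B × B | ∀ y : B × B, dicksonMulR σ c x y = dicksonMulR σ c y x}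
        = {x : B × B | x.1 ∈ Set.range (algebraMap F B) ∧ x.2 ∈ Set.range (algebraMap F B)} ∧
    (c ∈ Set.range (algebraMap F B) →
      {x : B × B | ∀ y : B × B, dicksonMulM σ c x y = dicksonMulM σ c y x}
        = {x : B × B | x.1 ∈ Set.range (algebraMap F B) ∧ x.2 ∈ Set.range (algebraMap F B)}) ∧
    (c ∉ Set.range (algebraMap F B) →
      {x : B × B | ∀ y : B × B, dicksonMulM σ c x y = dicksonMulM σ c y x}
        = {x : B × B | x.1 ∈ Set.range (algebraMap F B) ∧ x.2 = 0}) := by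
  refine ⟨?_, ?_, ?_, ?_⟩
  · ext ⟨u, v⟩
    simp only [Set.mem_setOf_eq, dicksonMul, Prod.mk.injEq]
    constructor
    · intro h
      constructor
      · exact mem_range_of_comm fun x => by simpa using (h (x, 0)).1
      · exact mem_range_of_comm fun x => by simpa using (h (x, 0)).2
    · rintro ⟨⟨a, rfl⟩, ⟨b, rfl⟩⟩ ⟨x, y⟩
      constructor
      · rw [Algebra.commutes, Algebra.commutes]
      · rw [Algebra.commutes, Algebra.commutes]; exact add_comm _ _
  · ext ⟨u, v⟩
    simp only [Set.mem_setOf_eq, dicksonMulR, Prod.mk.injEq]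
    constructor
    · intro h
      constructor
      · exact mem_range_of_comm fun x => by simpa using (h (x, 0)).1
      · exact mem_range_of_comm fun x => by simpa using (h (x, 0)).2
    · rintro ⟨⟨a, rfl⟩, ⟨b, rfl⟩⟩ ⟨x, y⟩
      constructor
      · rw [Algebra.commutes, Algebra.commutes]
      · rw [Algebra.commutes, Algebra.commutes]; exact add_comm _ _
  · rintro ⟨a, rfl⟩
    ext ⟨u, v⟩
    simp only [Set.mem_setOf_eq, dicksonMulM, Prod.mk.injEq]
    constructor
    · intro h
      constructor
      · exact mem_range_of_comm fun x => by simpa using (h (x, 0)).1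
      · exact mem_range_of_comm fun x => by simpa using (h (x, 0)).2
    · rintro ⟨⟨p, rfl⟩, ⟨q, rfl⟩⟩ ⟨x, y⟩
      constructor
      · have c2 : ∀ z : B, algebraMap F B q * algebraMap F B a * z
            = z * (algebraMap F B a * algebraMap F B q) := fun z => by
          rw [← map_mul, ← map_mul, Algebra.commutes, mul_comm q a]
        simp only [AlgEquiv.commutes]
        rw [Algebra.commutes (A := B) p x, c2 (σ y), ← mul_assoc]
      · rw [Algebra.commutes, Algebra.commutes]; exact add_comm _ _
  · intro hcF
    ext ⟨u, v⟩
    simp only [Set.mem_setOf_eq, dicksonMulM, Prod.mk.injEq]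
    constructor
    · intro h
      have hu : u ∈ Set.range (algebraMap F B) :=
        mem_range_of_comm fun x => by simpa using (h (x, 0)).1
      have hv : v ∈ Set.range (algebraMap F B) :=
        mem_range_of_comm fun x => by simpa using (h (x, 0)).2
      refine ⟨hu, ?_⟩
      obtain ⟨q, rfl⟩ := hv
      by_contra hq0
      have hq : q ≠ 0 := fun h0 => hq0 (by simp [h0])
      -- c must be central
      apply hcF
      apply mem_range_of_comm
      intro b
      have := (h (0, σ.symm b)).1
      simp only [zero_mul, mul_zero, zero_add, AlgEquiv.commutes, AlgEquiv.apply_symm_apply]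
        at this
      have haq : IsUnit ((algebraMap F B) q) := hq.isUnit.map (algebraMap F B)
      have h3 : c * b * algebraMap F B q = b * c * algebraMap F B q := by
        rw [mul_assoc, ← Algebra.commutes (A := B) q b, ← mul_assoc,
          ← Algebra.commutes (A := B) q c, this]
      exact haq.mul_right_cancel h3
    · rintro ⟨⟨p, rfl⟩, rfl⟩ ⟨x, y⟩
      constructor
      · simp [Algebra.commutes]
      · rw [Algebra.commutes]; simp
end

section
/- Let B be an associative division algebra over F (central simple division), σ ∈ Aut_F(B) nontrivial, c ∈ B^×. Then D(B,σ,c) with multiplication (u,v)(x,y) = (ux + cσ(vy), uy + vx) is a division algebra if and only if c ≠ r·t⁻¹·r·s·σ(s⁻¹t⁻¹) for all r,s,t ∈ B^×. -/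
theorem stmt18 (F B : Type*) [Field F] [DivisionRing B] [Algebra F B]
    [FiniteDimensional F B] [Algebra.IsCentral F B]
    (σ : B ≃ₐ[F] B) (hσ : σ ≠ AlgEquiv.refl) (c : B) (hc : c ≠ 0) :
    (∀ p q : B × B, dicksonMul σ c p q = 0 → p = 0 ∨ q = 0) ↔
      ∀ r s t : B, r ≠ 0 → s ≠ 0 → t ≠ 0 →
        c ≠ r * t⁻¹ * r * s * σ (s⁻¹ * t⁻¹) := by
  constructor
  · intro h r s t hr hs ht heq
    have key : dicksonMul σ c (r, t) (-(t⁻¹ * (r * s)), s) = 0 := by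
      unfold dicksonMul
      simp only [Prod.mk_eq_zero]
      constructor
      · have hσ1 : σ (s⁻¹ * t⁻¹) * σ (t * s) = 1 := by
          rw [← map_mul]
          have : s⁻¹ * t⁻¹ * (t * s) = 1 := by
            rw [mul_assoc, ← mul_assoc t⁻¹, inv_mul_cancel₀ ht, one_mul,
              inv_mul_cancel₀ hs]
          rw [this, map_one]
        have : c * σ (t * s) = r * (t⁻¹ * (r * s)) := by
          rw [heq, mul_assoc _ _ (σ (t*s)), hσ1, mul_one, mul_assoc, mul_assoc]
        rw [this, mul_neg, neg_add_cancel]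
      · rw [mul_neg, mul_inv_cancel_left₀ ht, add_neg_cancel]
    rcases h _ _ key with hp | hq
    · exact hr (by simpa using congrArg Prod.fst hp)
    · exact hs (by simpa using congrArg Prod.snd hq)
  · intro h p q hpq
    by_contra hcon
    push_neg at hcon
    obtain ⟨hp, hq⟩ := hcon
    obtain ⟨u, v⟩ := p
    obtain ⟨x, y⟩ := q
    unfold dicksonMul at hpq
    simp only [Prod.mk_eq_zero] at hpq
    simp only [ne_eq, Prod.mk_eq_zero, not_and_or] at hp hq
    obtain ⟨h1, h2⟩ := hpq
    have hy : y ≠ 0 := by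
      intro hy0
      subst hy0
      simp only [mul_zero, map_zero, add_zero, zero_add] at h1 h2
      have hx : x ≠ 0 := by rcases hq with h | h <;> simp_all
      rcases hp with h | h
      · exact h ((mul_eq_zero.1 h1).resolve_right hx)
      · exact h ((mul_eq_zero.1 h2).resolve_right hx)
    have hv : v ≠ 0 := by
      intro hv0
      subst hv0
      simp only [zero_mul, map_zero, mul_zero, add_zero] at h1 h2
      have hu : u ≠ 0 := by rcases hp with h | h <;> simp_all
      have hx : x = 0 := (mul_eq_zero.1 h1).resolve_left hu
      have hy' : y = 0 := (mul_eq_zero.1 h2).resolve_left hu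
      exact hy hy'
    have hu : u ≠ 0 := by
      intro hu0
      subst hu0
      simp only [zero_mul, zero_add] at h1 h2
      have : σ (v * y) = 0 := (mul_eq_zero.1 h1).resolve_left hc
      have : v * y = 0 := by
        have := congrArg σ.symm this
        simpa using this
      rcases mul_eq_zero.1 this with h | h
      · exact hv h
      · exact hy h
    apply h u y v hu hy hv
    have hvy : v * y ≠ 0 := mul_ne_zero hv hy
    have hk : σ (v * y) ≠ 0 := by
      intro h0
      apply hvy
      have := congrArg σ.symm h0
      simpa using this
    have h3 : v * x = -(u * y) := eq_neg_of_add_eq_zero_right h2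
    have hx : x = -(v⁻¹ * (u * y)) := by
      rw [← inv_mul_cancel_left₀ hv x, h3, mul_neg]
    have hcx : c * σ (v * y) = u * (v⁻¹ * (u * y)) := by
      have h4 : u * x = -(c * σ (v * y)) := eq_neg_of_add_eq_zero_left h1
      rw [hx, mul_neg, neg_inj] at h4
      exact h4.symm
    have hfin : σ (y⁻¹ * v⁻¹) = (σ (v * y))⁻¹ := by
      rw [← mul_inv_rev, map_inv₀]
    calc c = c * σ (v * y) * (σ (v * y))⁻¹ := by rw [mul_inv_cancel_right₀ hk]
      _ = u * (v⁻¹ * (u * y)) * (σ (v * y))⁻¹ := by rw [hcx]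
      _ = u * v⁻¹ * u * y * σ (y⁻¹ * v⁻¹) := by rw [hfin]; simp [mul_assoc]
end
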